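/- arXiv:1906.04001 — 4 statements merged into one kernel-verified Lean document; each statement's English description precedes it below -/
import Mathlib

section
/- If a trajectory eventually remains in a compact set Ω, then for any continuous Φ and any C¹ auxiliary function V, the infinite-time average of Φ along the trajectory is bounded above by max_{x ∈ Ω} { Φ(x) + f(x) · ∇V(x) }. -/
open Filter intervalIntegral Topology

/-- If a trajectory of `da/dt = f(a)` eventually remains in a compact set `Ω`,
then for any continuous `Φ` and any C¹ auxiliary function `V`, the infinite-time average of
`Φ` along the trajectory is bounded above by `max_{x ∈ Ω} {Φ(x) + f(x)·∇V(x)}`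
(the dot product with the gradient written as the derivative of `V` in direction `f(x)`). -/
theorem time_average_le_max {n : ℕ} (f : (Fin n → ℝ) → (Fin n → ℝ))
    (a : ℝ → (Fin n → ℝ)) (Ω : Set (Fin n → ℝ)) (Φ V : (Fin n → ℝ) → ℝ)
    (hf : ContDiff ℝ 1 f)
    (ha : ∀ t : ℝ, HasDerivAt a (f (a t)) t)
    (hΩ : IsCompact Ω) (hΩne : Ω.Nonempty)
    (habs : ∃ T₀ : ℝ, ∀ t : ℝ, T₀ ≤ t → a t ∈ Ω)
    (hΦ : Continuous Φ) (hV : ContDiff ℝ 1 V) :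
    Filter.limsup (fun T : ℝ => (1 / T) * ∫ t in (0:ℝ)..T, Φ (a t)) Filter.atTop ≤
      sSup ((fun x => Φ x + fderiv ℝ V x (f x)) '' Ω) := by
  have ha_cont : Continuous a :=
    continuous_iff_continuousAt.2 fun t => (ha t).continuousAt
  have hdV : Continuous fun x => fderiv ℝ V x (f x) :=
    isBoundedBilinearMap_apply.continuous.comp
      ((hV.continuous_fderiv one_ne_zero).prodMk hf.continuous)
  set M := sSup ((fun x => Φ x + fderiv ℝ V x (f x)) '' Ω) with hM
  have himg : IsCompact ((fun x => Φ x + fderiv ℝ V x (f x)) '' Ω) :=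
    hΩ.image (hΦ.add hdV)
  have hle : ∀ x ∈ Ω, Φ x + fderiv ℝ V x (f x) ≤ M := fun x hx =>
    le_csSup himg.bddAbove ⟨x, hx, rfl⟩
  obtain ⟨T₀, hT₀⟩ := habs
  set S := max T₀ 0 with hSdef
  have hS0 : (0:ℝ) ≤ S := le_max_right _ _
  have hST : ∀ t, S ≤ t → a t ∈ Ω := fun t ht => hT₀ t ((le_max_left _ _).trans ht)
  obtain ⟨xV, hxV, hminV⟩ := hΩ.exists_isMinOn hΩne hV.continuous.continuousOn
  obtain ⟨xΦ, hxΦ, hminΦ⟩ := hΩ.exists_isMinOn hΩne hΦ.continuousOn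
  have hderiv : ∀ t, HasDerivAt (fun s => V (a s)) (fderiv ℝ V (a t) (f (a t))) t := fun t =>
    (hV.differentiable one_ne_zero (a t)).hasFDerivAt.comp_hasDerivAt t (ha t)
  have hΦa_int : ∀ p q : ℝ, IntervalIntegrable (fun t => Φ (a t)) MeasureTheory.volume p q :=
    fun p q => (hΦ.comp ha_cont).intervalIntegrable p q
  have hdVa_int : ∀ p q : ℝ, IntervalIntegrable (fun t => fderiv ℝ V (a t) (f (a t)))
      MeasureTheory.volume p q := fun p q => (hdV.comp ha_cont).intervalIntegrable p q
  set K := ∫ t in (0:ℝ)..S, Φ (a t) with hK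
  set u : ℝ → ℝ := fun T => (1 / T) * ∫ t in (0:ℝ)..T, Φ (a t) with hu
  set v : ℝ → ℝ := fun T => (K + V (a S) - V xV - M * S) / T + M with hv
  set w : ℝ → ℝ := fun T => (K - Φ xΦ * S) / T + Φ xΦ with hw
  have hTpos : ∀ T : ℝ, max S 1 ≤ T → 0 < T := fun T hT =>
    lt_of_lt_of_le one_pos ((le_max_right S 1).trans hT)
  have hsplit : ∀ T : ℝ, (∫ t in (0:ℝ)..T, Φ (a t)) = K + ∫ t in S..T, Φ (a t) := by
    intro T
    rw [hK, intervalIntegral.integral_add_adjacent_intervals (hΦa_int 0 S) (hΦa_int S T)]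
  -- upper bound
  have hub : ∀ T : ℝ, max S 1 ≤ T → u T ≤ v T := by
    intro T hT
    have hTpos' := hTpos T hT
    have hSTle : S ≤ T := (le_max_left S 1).trans hT
    have hFTC : (∫ t in S..T, fderiv ℝ V (a t) (f (a t))) = V (a T) - V (a S) :=
      intervalIntegral.integral_eq_sub_of_hasDerivAt (fun t _ => hderiv t) (hdVa_int S T)
    have hmono : (∫ t in S..T, (Φ (a t) + fderiv ℝ V (a t) (f (a t)))) ≤
        ∫ t in S..T, M := by
      apply intervalIntegral.integral_mono_on hSTle ((hΦa_int S T).add (hdVa_int S T))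
        intervalIntegrable_const
      intro t ht
      exact hle (a t) (hST t ht.1)
    rw [intervalIntegral.integral_const, smul_eq_mul] at hmono
    rw [intervalIntegral.integral_add (hΦa_int S T) (hdVa_int S T), hFTC] at hmono
    have hVT : V xV ≤ V (a T) := hminV (hST T hSTle)
    have hineq : (∫ t in (0:ℝ)..T, Φ (a t)) ≤ K + (T - S) * M + V (a S) - V xV := by
      rw [hsplit T]; linarith
    have : u T ≤ (1 / T) * (K + (T - S) * M + V (a S) - V xV) := by
      apply mul_le_mul_of_nonneg_left hineq
      positivity
    refine this.trans (le_of_eq ?_)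
    simp only [hv]
    field_simp
    ring
  -- lower bound
  have hlb : ∀ T : ℝ, max S 1 ≤ T → w T ≤ u T := by
    intro T hT
    have hTpos' := hTpos T hT
    have hSTle : S ≤ T := (le_max_left S 1).trans hT
    have hmono : (∫ t in S..T, (Φ xΦ : ℝ)) ≤ ∫ t in S..T, Φ (a t) := by
      apply intervalIntegral.integral_mono_on hSTle intervalIntegrable_const (hΦa_int S T)
      intro t ht
      exact hminΦ (hST t ht.1)
    rw [intervalIntegral.integral_const, smul_eq_mul] at hmono
    have hineq : K + (T - S) * Φ xΦ ≤ ∫ t in (0:ℝ)..T, Φ (a t) := by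
      rw [hsplit T]; linarith
    have h2 : (1 / T) * (K + (T - S) * Φ xΦ) ≤ u T := by
      apply mul_le_mul_of_nonneg_left hineq
      positivity
    refine (le_of_eq ?_).trans h2
    simp only [hw]
    field_simp
    ring
  have hv_t : Tendsto v atTop (𝓝 M) := by
    have := (tendsto_const_nhds (x := K + V (a S) - V xV - M * S) (f := atTop (α := ℝ))).div_atTop tendsto_id
    simpa using this.add (tendsto_const_nhds (x := M))
  have hw_t : Tendsto w atTop (𝓝 (Φ xΦ)) := by
    have := (tendsto_const_nhds (x := K - Φ xΦ * S) (f := atTop (α := ℝ))).div_atTop tendsto_id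
    simpa using this.add (tendsto_const_nhds (x := Φ xΦ))
  have hev_ub : ∀ᶠ T in atTop, u T ≤ v T := eventually_atTop.2 ⟨max S 1, hub⟩
  have hev_lb : ∀ᶠ T in atTop, Φ xΦ - 1 ≤ u T := by
    filter_upwards [eventually_atTop.2 ⟨max S 1, hlb⟩,
      hw_t.eventually (eventually_ge_nhds (by linarith : Φ xΦ - 1 < Φ xΦ))] with T h1 h2
    exact h2.trans h1
  have hcob : IsCoboundedUnder (· ≤ ·) atTop u :=
    isCoboundedUnder_le_of_eventually_le atTop hev_lb
  calc limsup u atTop ≤ limsup v atTop :=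
        limsup_le_limsup hev_ub hcob hv_t.isBoundedUnder_le
    _ = M := hv_t.limsup_eq
end

section
/- Symmetrization of certificates: let T : ℝⁿ → ℝⁿ be an invertible linear map with Tᴷ = id for some K ≥ 1, and suppose f(T a) = T f(a), Φ(T a) = Φ(a), and gᵢ(T a) = gᵢ(a) for all i. If polynomials V, σ₀, …, σ_m (with each σᵢ SOS) satisfy λ − Φ(a) − f(a)·∇V(a) = σ₀(a) + Σᵢ σᵢ(a) gᵢ(a) for all a, then the T-invariant symmetrized functions V̂(a) = (1/K)Σ_{k<K} V(Tᵏa) and σ̂ᵢ(a) = (1/K)Σ_{k<K} σᵢ(Tᵏa) satisfy λ − Φ(a) − f(a)·∇V̂(a) = σ̂₀(a) + Σᵢ σ̂ᵢ(a) gᵢ(a) for all a, and each σ̂ᵢ is again SOS. -/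
open MvPolynomial

/-- The average of a function over the cyclic group generated by a linear map `T`. -/
noncomputable def symmAvg {n : ℕ} (K : ℕ) (T : (Fin n → ℝ) →ₗ[ℝ] (Fin n → ℝ))
    (p : (Fin n → ℝ) → ℝ) : (Fin n → ℝ) → ℝ :=
  fun a => (1 / (K : ℝ)) * ∑ k ∈ Finset.range K, p ((⇑T)^[k] a)

/-- A function on `ℝⁿ` is a sum of squares of polynomial functions. -/
def IsSOSFun {n : ℕ} (h : (Fin n → ℝ) → ℝ) : Prop :=
  ∃ (k : ℕ) (q : Fin k → MvPolynomial (Fin n) ℝ),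
    h = fun a => ∑ j, (MvPolynomial.eval a (q j)) ^ 2

lemma eval_eq_aeval' {n : ℕ} (b : Fin n → ℝ) (q : MvPolynomial (Fin n) ℝ) :
    eval b q = aeval b q := rfl

noncomputable def compLin {n : ℕ} (S : (Fin n → ℝ) →ₗ[ℝ] (Fin n → ℝ))
    (p : MvPolynomial (Fin n) ℝ) : MvPolynomial (Fin n) ℝ :=
  bind₁ (fun i => ∑ j, C (S (fun t => if j = t then 1 else 0) i) * X j) p

lemma eval_compLin {n : ℕ} (S : (Fin n → ℝ) →ₗ[ℝ] (Fin n → ℝ))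
    (p : MvPolynomial (Fin n) ℝ) (a : Fin n → ℝ) :
    eval a (compLin S p) = eval (S a) p := by
  rw [compLin, eval_eq_aeval', aeval_bind₁]
  have h : (fun i => aeval (R := ℝ) a
      (∑ j, C (S (fun t => if j = t then 1 else 0) i) * X j)) = S a := by
    funext i
    rw [← eval_eq_aeval', LinearMap.pi_apply_eq_sum_univ S a]
    simp [Finset.sum_apply, mul_comm]
  rw [h, eval_eq_aeval']

lemma symmAvg_inv {n : ℕ} (K : ℕ) (T : (Fin n → ℝ) →ₗ[ℝ] (Fin n → ℝ))
    (hTK : ∀ a : Fin n → ℝ, (⇑T)^[K] a = a) (p : (Fin n → ℝ) → ℝ) (a : Fin n → ℝ) :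
    symmAvg K T p (T a) = symmAvg K T p a := by
  unfold symmAvg
  congr 1
  have e1 : ∑ k ∈ Finset.range K, p ((⇑T)^[k] (T a))
      = ∑ k ∈ Finset.range K, p ((⇑T)^[k+1] a) :=
    Finset.sum_congr rfl fun k _ => by rw [← Function.iterate_succ_apply]
  have h1 := Finset.sum_range_succ' (fun k => p ((⇑T)^[k] a)) K
  have h2 := Finset.sum_range_succ (fun k => p ((⇑T)^[k] a)) K
  have h3 : p ((⇑T)^[K] a) = p ((⇑T)^[0] a) := by rw [hTK]; simp
  rw [e1]
  simp only [h3, Function.iterate_zero, id_eq] at h1 h2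
  linarith [h1.symm.trans h2]

lemma isSOSFun_symmAvg {n : ℕ} (K : ℕ) (T : (Fin n → ℝ) →ₗ[ℝ] (Fin n → ℝ))
    {h : (Fin n → ℝ) → ℝ} (hh : IsSOSFun h) : IsSOSFun (symmAvg K T h) := by
  obtain ⟨r, q, rfl⟩ := hh
  refine ⟨K * r, fun j => C (Real.sqrt (1/(K:ℝ))) *
    compLin (T ^ ((finProdFinEquiv.symm j).1 : Fin K).val) (q (finProdFinEquiv.symm j).2), ?_⟩
  funext a
  rw [← Equiv.sum_comp finProdFinEquiv]
  simp only [Equiv.symm_apply_apply, map_mul, eval_C, eval_compLin, mul_pow,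
    Real.sq_sqrt (by positivity : (0:ℝ) ≤ 1/(K:ℝ)), Module.End.pow_apply]
  rw [symmAvg]
  rw [Fintype.sum_prod_type, ← Fin.sum_univ_eq_sum_range
    (fun k => ∑ j, (eval ((⇑T)^[k] a) (q j)) ^ 2) K, Finset.mul_sum]
  exact Finset.sum_congr rfl fun k _ => by rw [Finset.mul_sum]

/-- Symmetrization of weighted-SOS certificates. If `T` is an invertible
linear map of finite order `K`, the dynamics `f`, observable `Φ`, and constraints `gᵢ`
are `T`-invariant/equivariant, and polynomials `V, σ₀, …, σ_m` (each `σᵢ` SOS) satisfy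
the certificate identity `λ − Φ − f·∇V = σ₀ + Σᵢ σᵢ gᵢ` pointwise, then the
symmetrized functions `V̂, σ̂ᵢ` are `T`-invariant, satisfy the same identity, and each
`σ̂ᵢ` is again a sum of squares. -/
theorem symmetrized_certificate {n m : ℕ} (K : ℕ) (hK : 1 ≤ K)
    (T : (Fin n → ℝ) →ₗ[ℝ] (Fin n → ℝ))
    (hTinv : Function.Bijective T)
    (hTK : ∀ a : Fin n → ℝ, (⇑T)^[K] a = a)
    (f : Fin n → MvPolynomial (Fin n) ℝ)
    (Φ V : MvPolynomial (Fin n) ℝ)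
    (g : Fin m → MvPolynomial (Fin n) ℝ)
    (σ₀ : MvPolynomial (Fin n) ℝ) (σ : Fin m → MvPolynomial (Fin n) ℝ)
    (lam : ℝ)
    (hfT : ∀ a : Fin n → ℝ, (fun i => eval (T a) (f i)) = T (fun i => eval a (f i)))
    (hΦT : ∀ a : Fin n → ℝ, eval (T a) Φ = eval a Φ)
    (hgT : ∀ (a : Fin n → ℝ) (i : Fin m), eval (T a) (g i) = eval a (g i))
    (hσ₀ : IsSOSFun (fun a => eval a σ₀))
    (hσ : ∀ i, IsSOSFun (fun a => eval a (σ i)))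
    (hcert : ∀ a : Fin n → ℝ,
      lam - eval a Φ - fderiv ℝ (fun x => eval x V) a (fun i => eval a (f i)) =
        eval a σ₀ + ∑ i, eval a (σ i) * eval a (g i)) :
    (∀ a : Fin n → ℝ,
      symmAvg K T (fun x => eval x V) (T a) = symmAvg K T (fun x => eval x V) a) ∧
    (∀ a : Fin n → ℝ,
      symmAvg K T (fun x => eval x σ₀) (T a) = symmAvg K T (fun x => eval x σ₀) a) ∧
    (∀ (i : Fin m) (a : Fin n → ℝ),
      symmAvg K T (fun x => eval x (σ i)) (T a) = symmAvg K T (fun x => eval x (σ i)) a) ∧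
    (∀ a : Fin n → ℝ,
      lam - eval a Φ - fderiv ℝ (symmAvg K T (fun x => eval x V)) a (fun i => eval a (f i)) =
        symmAvg K T (fun x => eval x σ₀) a +
          ∑ i, symmAvg K T (fun x => eval x (σ i)) a * eval a (g i)) ∧
    IsSOSFun (symmAvg K T (fun x => eval x σ₀)) ∧
    (∀ i, IsSOSFun (symmAvg K T (fun x => eval x (σ i)))) := by
  have hKpos : (0:ℝ) < (K:ℝ) := by exact_mod_cast hK
  have hKne : (K:ℝ) ≠ 0 := ne_of_gt hKpos
  -- iterated invariance
  have hΦiter : ∀ (k : ℕ) (a : Fin n → ℝ), eval ((⇑T)^[k] a) Φ = eval a Φ := by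
    intro k
    induction k with
    | zero => intro a; simp
    | succ k ih => intro a; rw [Function.iterate_succ_apply', hΦT, ih]
  have hgiter : ∀ (k : ℕ) (a : Fin n → ℝ) (i : Fin m),
      eval ((⇑T)^[k] a) (g i) = eval a (g i) := by
    intro k
    induction k with
    | zero => intro a i; simp
    | succ k ih => intro a i; rw [Function.iterate_succ_apply', hgT, ih]
  have hFiter : ∀ (k : ℕ) (a : Fin n → ℝ),
      (fun i => eval ((⇑T)^[k] a) (f i)) = (⇑T)^[k] (fun i => eval a (f i)) := by
    intro k
    induction k with
    | zero => intro a; simp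
    | succ k ih =>
      intro a
      rw [Function.iterate_succ_apply', Function.iterate_succ_apply', hfT, ih]
  have hVd : ∀ x : Fin n → ℝ, DifferentiableAt ℝ (fun y => eval y V) x := fun x =>
    ((AnalyticOnNhd.eval_mvPolynomial (𝕜 := ℝ) V) x (Set.mem_univ x)).differentiableAt
  refine ⟨fun a => symmAvg_inv K T hTK _ a, fun a => symmAvg_inv K T hTK _ a,
    fun i a => symmAvg_inv K T hTK _ a, ?_, isSOSFun_symmAvg K T hσ₀,
    fun i => isSOSFun_symmAvg K T (hσ i)⟩
  intro a
  -- derivative of the symmetrized V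
  have hder : HasFDerivAt (symmAvg K T (fun x => eval x V))
      ((1/(K:ℝ)) • ∑ k ∈ Finset.range K,
        (fderiv ℝ (fun y => eval y V) ((⇑T)^[k] a)).comp
          (LinearMap.toContinuousLinearMap (T ^ k))) a := by
    have hsum : HasFDerivAt (fun x => ∑ k ∈ Finset.range K, eval ((⇑T)^[k] x) V)
        (∑ k ∈ Finset.range K, (fderiv ℝ (fun y => eval y V) ((⇑T)^[k] a)).comp
          (LinearMap.toContinuousLinearMap (T ^ k))) a := by
      apply HasFDerivAt.fun_sum
      intro k _
      have h1 := HasFDerivAt.comp a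
        ((hVd ((LinearMap.toContinuousLinearMap (T ^ k)) a)).hasFDerivAt)
        (LinearMap.toContinuousLinearMap (T ^ k)).hasFDerivAt
      have h2 : ((LinearMap.toContinuousLinearMap (T ^ k)) a) = (⇑T)^[k] a := by
        simp [Module.End.pow_apply]
      have h3 : ((fun y => eval y V) ∘ ⇑(LinearMap.toContinuousLinearMap (T ^ k)))
          = fun x => eval ((⇑T)^[k] x) V := by
        funext x; simp [Module.End.pow_apply]
      rw [h2, h3] at h1
      exact h1
    have := hsum.const_mul (1/(K:ℝ))
    exact this
  rw [hder.fderiv]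
  simp only [ContinuousLinearMap.smul_apply, ContinuousLinearMap.sum_apply,
    ContinuousLinearMap.coe_comp', Function.comp_apply,
    LinearMap.coe_toContinuousLinearMap', Module.End.pow_apply, smul_eq_mul]
  have hterm : ∀ k ∈ Finset.range K,
      fderiv ℝ (fun y => eval y V) ((⇑T)^[k] a) ((⇑T)^[k] fun i => eval a (f i)) =
        lam - eval a Φ - (eval ((⇑T)^[k] a) σ₀ +
          ∑ i, eval ((⇑T)^[k] a) (σ i) * eval a (g i)) := by
    intro k _
    have h1 := hcert ((⇑T)^[k] a)
    have h2 : ∑ i, eval ((⇑T)^[k] a) (σ i) * eval ((⇑T)^[k] a) (g i)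
        = ∑ i, eval ((⇑T)^[k] a) (σ i) * eval a (g i) :=
      Finset.sum_congr rfl fun i _ => by rw [hgiter k a i]
    rw [hΦiter k a, h2] at h1
    rw [← hFiter k a]
    linarith [h1]
  rw [Finset.sum_congr rfl hterm]
  simp only [symmAvg]
  rw [Finset.sum_sub_distrib, Finset.sum_const, Finset.sum_add_distrib, Finset.sum_comm]
  simp only [← Finset.sum_mul]
  set A := ∑ k ∈ Finset.range K, eval ((⇑T)^[k] a) σ₀ with hA
  set CC := ∑ i, (∑ k ∈ Finset.range K, eval ((⇑T)^[k] a) (σ i)) * eval a (g i) with hC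
  have hrhs : ∑ i, 1/(K:ℝ) * (∑ k ∈ Finset.range K, eval ((⇑T)^[k] a) (σ i)) * eval a (g i)
      = 1/(K:ℝ) * CC := by
    rw [hC, Finset.mul_sum]
    exact Finset.sum_congr rfl fun i _ => by ring
  rw [hrhs, nsmul_eq_mul, Finset.card_range]
  field_simp
  ring
end

section
/- Convergence of the weighted-SOS hierarchy: suppose Ω = {a : g₁(a) ≥ 0, …, g_m(a) ≥ 0} is compact, the quadratic module generated by g₁,…,g_m is Archimedean (i.e., L − ‖a‖² belongs to it for some L), and for every ε > 0 there exists a polynomial V with Φ̄* + ε − Φ − f·∇V strictly positive on Ω. Then, granting Putinar's Positivstellensatz (every polynomial strictly positive on Ω lies in the quadratic module), the infimum over d of inf{ λ : λ − Φ − f·∇V ∈ Λ_d, V polynomial of degree ≤ d } equals Φ̄*, where Λ_d is the degree-truncated quadratic module and each member of Λ_d is nonnegative on Ω while Φ̄* = inf over polynomial V of the max over Ω of Φ + f·∇V. -/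
open MvPolynomial

/-- A multivariate real polynomial is a sum of squares (SOS). -/
def IsSOS {n : ℕ} (σ : MvPolynomial (Fin n) ℝ) : Prop :=
  ∃ (k : ℕ) (p : Fin k → MvPolynomial (Fin n) ℝ), σ = ∑ j, (p j) ^ 2

/-- Membership in the degree-truncated quadratic module generated by `g₁, …, g_m`:
`p = σ₀ + Σᵢ σᵢ gᵢ` with each `σᵢ` SOS, `σ₀` of degree at most `r`, and each `σᵢ` of
degree at most `r − s`. -/
def InTruncModule {n m : ℕ} (g : Fin m → MvPolynomial (Fin n) ℝ) (r s : ℕ)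
    (p : MvPolynomial (Fin n) ℝ) : Prop :=
  ∃ (σ₀ : MvPolynomial (Fin n) ℝ) (σ : Fin m → MvPolynomial (Fin n) ℝ),
    IsSOS σ₀ ∧ (∀ i, IsSOS (σ i)) ∧ σ₀.totalDegree ≤ r ∧
    (∀ i, (σ i).totalDegree ≤ r - s) ∧ p = σ₀ + ∑ i, σ i * g i

lemma IsSOS.eval_nonneg {n : ℕ} {σ : MvPolynomial (Fin n) ℝ} (h : IsSOS σ)
    (a : Fin n → ℝ) : 0 ≤ eval a σ := by
  obtain ⟨k, p, rfl⟩ := h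
  simp only [map_sum, map_pow]
  positivity

lemma InTruncModule.eval_nonneg {n m : ℕ} {g : Fin m → MvPolynomial (Fin n) ℝ}
    {r s : ℕ} {p : MvPolynomial (Fin n) ℝ} (h : InTruncModule g r s p)
    (a : Fin n → ℝ) (hg : ∀ i, 0 ≤ eval a (g i)) : 0 ≤ eval a p := by
  obtain ⟨σ₀, σ, hσ₀, hσ, -, -, rfl⟩ := h
  simp only [map_add, map_sum, map_mul]
  have : 0 ≤ ∑ i, eval a (σ i) * eval a (g i) :=
    Finset.sum_nonneg fun i _ => mul_nonneg ((hσ i).eval_nonneg a) (hg i)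
  linarith [hσ₀.eval_nonneg a]

lemma InTruncModule.mono {n m : ℕ} {g : Fin m → MvPolynomial (Fin n) ℝ}
    {r r' s : ℕ} {p : MvPolynomial (Fin n) ℝ} (h : InTruncModule g r s p)
    (hrr : r ≤ r') : InTruncModule g r' s p := by
  obtain ⟨σ₀, σ, hσ₀, hσ, h₀, h₁, rfl⟩ := h
  exact ⟨σ₀, σ, hσ₀, hσ, h₀.trans hrr, fun i => (h₁ i).trans (Nat.sub_le_sub_right hrr s), rfl⟩

/-- Convergence of the weighted-SOS hierarchy. Suppose
`Ω = {a : g₁(a) ≥ 0, …, g_m(a) ≥ 0}` is compact, the quadratic module is Archimedean,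
and for every `ε > 0` there is a polynomial `V` with `Φ̄* + ε − Φ − f·∇V` strictly
positive on `Ω`. Granting Putinar's Positivstellensatz, and that `Φ̄*` is a lower bound
for every valid pointwise bound `λ` over `Ω` (i.e. `Φ̄* = inf_V max_Ω {Φ + f·∇V}`), the
infimum over the hierarchy `inf {λ : λ − Φ − f·∇V ∈ Λ_d}` equals `Φ̄*`. -/
theorem sos_hierarchy_converges {n m : ℕ}
    (f : Fin n → MvPolynomial (Fin n) ℝ)
    (Φ : MvPolynomial (Fin n) ℝ)
    (g : Fin m → MvPolynomial (Fin n) ℝ)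
    (r : ℕ → ℕ) (s : ℕ) (hr : Monotone r)
    (Φstar : ℝ)
    (Ω : Set (Fin n → ℝ))
    (hΩdef : Ω = {a : Fin n → ℝ | ∀ i, 0 ≤ eval a (g i)})
    (hΩc : IsCompact Ω)
    (harch : ∃ (L : ℝ) (d : ℕ),
      InTruncModule g (r d) s (C L - ∑ i, (X i : MvPolynomial (Fin n) ℝ) ^ 2))
    (hputinar : ∀ p : MvPolynomial (Fin n) ℝ,
      (∀ a ∈ Ω, 0 < eval a p) → ∃ d : ℕ, InTruncModule g (r d) s p)
    (hpos : ∀ ε : ℝ, 0 < ε → ∃ V : MvPolynomial (Fin n) ℝ, ∀ a ∈ Ω,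
      0 < Φstar + ε - eval a Φ - eval a (∑ i, f i * pderiv i V))
    (hlower : ∀ (V : MvPolynomial (Fin n) ℝ) (lam : ℝ),
      (∀ a ∈ Ω, eval a Φ + eval a (∑ i, f i * pderiv i V) ≤ lam) → Φstar ≤ lam) :
    sInf {lam : ℝ | ∃ (d : ℕ) (V : MvPolynomial (Fin n) ℝ), V.totalDegree ≤ d ∧
        InTruncModule g (r d) s (C lam - Φ - ∑ i, f i * pderiv i V)} = Φstar := by
  set S := {lam : ℝ | ∃ (d : ℕ) (V : MvPolynomial (Fin n) ℝ), V.totalDegree ≤ d ∧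
        InTruncModule g (r d) s (C lam - Φ - ∑ i, f i * pderiv i V)} with hS
  have hlb : ∀ lam ∈ S, Φstar ≤ lam := by
    intro lam hlam
    obtain ⟨d, V, -, hmem⟩ := hlam
    refine hlower V lam fun a ha => ?_
    have hg : ∀ i, 0 ≤ eval a (g i) := by rw [hΩdef] at ha; exact ha
    have := hmem.eval_nonneg a hg
    simp only [map_sub, eval_C] at this
    linarith
  have hmemS : ∀ ε : ℝ, 0 < ε → (Φstar + ε) ∈ S := by
    intro ε hε
    obtain ⟨V, hV⟩ := hpos ε hε
    have hp : ∀ a ∈ Ω, 0 < eval a (C (Φstar + ε) - Φ - ∑ i, f i * pderiv i V) := by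
      intro a ha
      simp only [map_sub, eval_C]
      linarith [hV a ha]
    obtain ⟨d₀, hd₀⟩ := hputinar _ hp
    exact ⟨max d₀ V.totalDegree, V, le_max_right _ _, hd₀.mono (hr (le_max_left _ _))⟩
  have hne : S.Nonempty := ⟨Φstar + 1, hmemS 1 one_pos⟩
  have hbdd : BddBelow S := ⟨Φstar, hlb⟩
  refine le_antisymm ?_ (le_csInf hne hlb)
  refine le_of_forall_pos_le_add fun ε hε => ?_
  exact csInf_le hbdd (hmemS ε hε)
end

section
/- If λ − Φ(a) − f(a)·∇V(a) ≥ 0 for all a in a compact set Ω in which every trajectory eventually remains, then λ ≥ Φ̄(a₀) for every initial condition a₀; hence λ ≥ Φ̄* = sup_{a₀} Φ̄(a₀). -/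
/-- If `λ − Φ(a) − f(a)·∇V(a) ≥ 0` for all `a` in a compact set `Ω` in
which every trajectory eventually remains, then `λ ≥ Φ̄(a₀)` for every initial condition
`a₀`; hence `λ ≥ Φ̄* = sup_{a₀} Φ̄(a₀)`. Here `a : a₀ ↦ (t ↦ a(t; a₀))` is the flow. -/
theorem aux_function_bound_on_averages {n : ℕ} (f : (Fin n → ℝ) → (Fin n → ℝ))
    (Ω : Set (Fin n → ℝ)) (Φ V : (Fin n → ℝ) → ℝ) (lam : ℝ)
    (a : (Fin n → ℝ) → ℝ → (Fin n → ℝ))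
    (hf : ContDiff ℝ 1 f) (hΩ : IsCompact Ω) (hΦ : Continuous Φ) (hV : ContDiff ℝ 1 V)
    (hflow₀ : ∀ a₀ : Fin n → ℝ, a a₀ 0 = a₀)
    (hflow : ∀ (a₀ : Fin n → ℝ) (t : ℝ), HasDerivAt (a a₀) (f (a a₀ t)) t)
    (habs : ∀ a₀ : Fin n → ℝ, ∃ T₀ : ℝ, ∀ t : ℝ, T₀ ≤ t → a a₀ t ∈ Ω)
    (hcert : ∀ x ∈ Ω, 0 ≤ lam - Φ x - fderiv ℝ V x (f x)) :
    (∀ a₀ : Fin n → ℝ,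
      Filter.limsup (fun T : ℝ => (1 / T) * ∫ t in (0:ℝ)..T, Φ (a a₀ t)) Filter.atTop ≤ lam) ∧
    (⨆ a₀ : Fin n → ℝ,
      Filter.limsup (fun T : ℝ => (1 / T) * ∫ t in (0:ℝ)..T, Φ (a a₀ t)) Filter.atTop) ≤ lam := by
  have key : ∀ a₀ : Fin n → ℝ,
      Filter.limsup (fun T : ℝ => (1 / T) * ∫ t in (0:ℝ)..T, Φ (a a₀ t)) Filter.atTop ≤ lam := by
    intro a₀
    set c : ℝ → (Fin n → ℝ) := a a₀ with hc
    have hc_cont : Continuous c :=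
      continuous_iff_continuousAt.mpr fun t => (hflow a₀ t).continuousAt
    -- the derivative term
    set g : ℝ → ℝ := fun t => fderiv ℝ V (c t) (f (c t)) with hg
    have hg_cont : Continuous g :=
      ((hV.continuous_fderiv one_ne_zero).comp hc_cont).clm_apply (hf.continuous.comp hc_cont)
    have hΦc : Continuous fun t => Φ (c t) := hΦ.comp hc_cont
    -- FTC
    have hFTC : ∀ T : ℝ, ∫ t in (0:ℝ)..T, g t = V (c T) - V (c 0) := by
      intro T
      refine intervalIntegral.integral_eq_sub_of_hasDerivAt (f := fun t => V (c t))
        (fun t _ => ?_) (hg_cont.intervalIntegrable 0 T)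
      exact ((hV.differentiable one_ne_zero) (c t)).hasFDerivAt.comp_hasDerivAt t (hflow a₀ t)
    obtain ⟨T₀, hT₀⟩ := habs a₀
    set T₁ : ℝ := max T₀ 1 with hT₁def
    have hT₁mem : ∀ t : ℝ, T₁ ≤ t → c t ∈ Ω := fun t ht =>
      hT₀ t (le_trans (le_max_left _ _) ht)
    obtain ⟨M, hM⟩ := hΩ.exists_bound_of_continuousOn hV.continuous.continuousOn
    set C₁ : ℝ := ∫ t in (0:ℝ)..T₁, (Φ (c t) + g t) with hC₁
    set K : ℝ := C₁ - lam * T₁ + M + V (c 0) with hK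
    -- the main bound for T ≥ T₁
    have hmain : ∀ T : ℝ, T₁ ≤ T → (∫ t in (0:ℝ)..T, Φ (c t)) ≤ lam * T + K := by
      intro T hT
      have hint1 : IntervalIntegrable (fun t => Φ (c t) + g t) MeasureTheory.volume 0 T₁ :=
        (hΦc.add hg_cont).intervalIntegrable _ _
      have hint2 : IntervalIntegrable (fun t => Φ (c t) + g t) MeasureTheory.volume T₁ T :=
        (hΦc.add hg_cont).intervalIntegrable _ _
      have hsplit : (∫ t in (0:ℝ)..T, (Φ (c t) + g t))
          = C₁ + ∫ t in T₁..T, (Φ (c t) + g t) := by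
        rw [hC₁, intervalIntegral.integral_add_adjacent_intervals hint1 hint2]
      have htail : (∫ t in T₁..T, (Φ (c t) + g t)) ≤ ∫ t in T₁..T, lam := by
        apply intervalIntegral.integral_mono_on hT hint2
          (intervalIntegrable_const)
        intro t ht
        have hmem : c t ∈ Ω := hT₁mem t ht.1
        have := hcert (c t) hmem
        simp only [g]
        linarith
      have htail' : (∫ t in T₁..T, (Φ (c t) + g t)) ≤ lam * (T - T₁) := by
        simpa [mul_comm] using htail
      have hVT : -M ≤ V (c T) := by
        have h2 : |V (c T)| ≤ M := by simpa using hM (c T) (hT₁mem T hT)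
        linarith [(abs_le.mp h2).1]
      have hdecomp : (∫ t in (0:ℝ)..T, Φ (c t))
          = (∫ t in (0:ℝ)..T, (Φ (c t) + g t)) - (V (c T) - V (c 0)) := by
        rw [intervalIntegral.integral_add (hΦc.intervalIntegrable _ _)
          (hg_cont.intervalIntegrable _ _), hFTC T]
        ring
      rw [hdecomp, hsplit]
      have : lam * (T - T₁) = lam * T - lam * T₁ := by ring
      linarith
    -- eventual bound on averages
    have hub : ∀ᶠ T in Filter.atTop,
        (1 / T) * (∫ t in (0:ℝ)..T, Φ (c t)) ≤ lam + K * T⁻¹ := by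
      filter_upwards [Filter.eventually_ge_atTop T₁,
        Filter.eventually_ge_atTop (1:ℝ)] with T hT hT1
      have hTpos : (0:ℝ) < T := lt_of_lt_of_le one_pos hT1
      have h1 := hmain T hT
      have hinv : (0:ℝ) < T⁻¹ := inv_pos.mpr hTpos
      have : (1 / T) * (∫ t in (0:ℝ)..T, Φ (c t)) ≤ (1 / T) * (lam * T + K) := by
        apply mul_le_mul_of_nonneg_left h1
        positivity
      refine le_trans this ?_
      rw [one_div]
      rw [mul_add, mul_comm lam T, ← mul_assoc, inv_mul_cancel₀ (ne_of_gt hTpos), one_mul,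
        mul_comm T⁻¹ K]
    have htend : Filter.Tendsto (fun T : ℝ => lam + K * T⁻¹) Filter.atTop (nhds lam) := by
      have : Filter.Tendsto (fun T : ℝ => K * T⁻¹) Filter.atTop (nhds 0) := by
        simpa using tendsto_inv_atTop_zero.const_mul K
      simpa using Filter.Tendsto.add (tendsto_const_nhds (x := lam)) this
    have hbdd : Filter.IsBoundedUnder (· ≤ ·) Filter.atTop (fun T : ℝ => lam + K * T⁻¹) :=
      htend.isBoundedUnder_le
    obtain ⟨B, hB⟩ := hΩ.exists_bound_of_continuousOn hΦ.continuousOn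
    set C₂ : ℝ := ∫ t in (0:ℝ)..T₁, Φ (c t) with hC₂
    set X : ℝ := C₂ + B * T₁ with hX
    have hlow : ∀ T : ℝ, T₁ ≤ T → X - B * T ≤ ∫ t in (0:ℝ)..T, Φ (c t) := by
      intro T hT
      have hint1 : IntervalIntegrable (fun t => Φ (c t)) MeasureTheory.volume 0 T₁ :=
        hΦc.intervalIntegrable _ _
      have hint2 : IntervalIntegrable (fun t => Φ (c t)) MeasureTheory.volume T₁ T :=
        hΦc.intervalIntegrable _ _
      have hsplit : (∫ t in (0:ℝ)..T, Φ (c t)) = C₂ + ∫ t in T₁..T, Φ (c t) := by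
        rw [hC₂, intervalIntegral.integral_add_adjacent_intervals hint1 hint2]
      have htail : (∫ t in T₁..T, (-B : ℝ)) ≤ ∫ t in T₁..T, Φ (c t) := by
        apply intervalIntegral.integral_mono_on hT intervalIntegrable_const hint2
        intro t ht
        have h2 : |Φ (c t)| ≤ B := by simpa using hB (c t) (hT₁mem t ht.1)
        linarith [(abs_le.mp h2).1]
      have htail' : -B * (T - T₁) ≤ ∫ t in T₁..T, Φ (c t) := by
        simpa [mul_comm] using htail
      rw [hsplit, hX]
      linarith
    have hlb : ∀ᶠ T in Filter.atTop,
        -|X| - B ≤ (1 / T) * ∫ t in (0:ℝ)..T, Φ (c t) := by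
      filter_upwards [Filter.eventually_ge_atTop T₁,
        Filter.eventually_ge_atTop (1:ℝ)] with T hT hT1
      have hTpos : (0:ℝ) < T := lt_of_lt_of_le one_pos hT1
      have h1 : (1 / T) * (X - B * T) ≤ (1 / T) * ∫ t in (0:ℝ)..T, Φ (c t) := by
        apply mul_le_mul_of_nonneg_left (hlow T hT)
        positivity
      refine le_trans ?_ h1
      have heq : (1 / T) * (X - B * T) = (X - B * T) / T := by ring
      rw [heq, le_div_iff₀ hTpos]
      nlinarith [mul_nonneg (sub_nonneg.mpr hT1) (abs_nonneg X), neg_abs_le X]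
    have hcobdd : Filter.IsCoboundedUnder (· ≤ ·) Filter.atTop
        (fun T : ℝ => (1 / T) * ∫ t in (0:ℝ)..T, Φ (c t)) :=
      Filter.isCoboundedUnder_le_of_eventually_le Filter.atTop hlb
    calc Filter.limsup (fun T : ℝ => (1 / T) * ∫ t in (0:ℝ)..T, Φ (c t)) Filter.atTop
        ≤ Filter.limsup (fun T : ℝ => lam + K * T⁻¹) Filter.atTop :=
          Filter.limsup_le_limsup hub hcobdd hbdd
      _ = lam := htend.limsup_eq
  exact ⟨key, ciSup_le key⟩
end
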